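/- arXiv:2412.19295 — 2 statements merged into one kernel-verified Lean document; each statement's English description precedes it below -/
import Mathlib

section
/- Let ω be the standard involution of the ring of symmetric functions (ω(e_i) = h_i, ω(p_i) = (-1)^{i-1} p_i), extended to symmetric power series over a torsion-free pre-λ ring R. If f is an even symmetric power series with zero constant term (a formal sum of monomials of even degree), then Exp_σ(ω(f)) = ω(Exp_σ(f)). -/
/-! In power-sum coordinates `ω` multiplies the coefficient of `p_λ` by `(-1)^(|λ| + ℓ(λ))`,
a sign that is multiplicative in `λ`, so `ω` is multiplicative. The Adams operations of a
pre-λ ring are additive (the logarithmic derivative of `σ_t(r) = ∑ σₙ(r) tⁿ` is their generating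
series, and `σ_t` turns sums into products), so they commute with signs. As `p_j ∘ p_λ = p_{jλ}`
has weight `j·|λ|` and length `ℓ(λ)`, the sign is unchanged when `|λ|` is even; hence `ω` commutes
with `p_j ∘ f` for even `f`, then with `h_k ∘ f` (a `ℚ`-combination of products of those), and
finally with `Exp_σ f = ∑ₖ h_k ∘ f`. -/

open Classical in
/-- A pre-λ ring: a commutative ring equipped with σ-operations satisfying
`σ₀ = 1`, `σ₁ = id`, and the binomial addition rule. -/
structure PreLambdaRing (R : Type*) [CommRing R] where
  sigma : ℕ → R → R
  sigma_zero : ∀ r, sigma 0 r = 1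
  sigma_one : ∀ r, sigma 1 r = r
  sigma_add : ∀ (k : ℕ) (r s : R),
    sigma k (r + s) = ∑ p ∈ Finset.HasAntidiagonal.antidiagonal k, sigma p.1 r * sigma p.2 s

variable {R : Type*} [CommRing R]

/-- The λ-operations (`eₖ ∘ ·`) derived from the σ-operations via the
identity `∑_{i+j=k} (-1)^i eᵢ h_j = 0` for `k ≥ 1`. -/
noncomputable def lamR (L : PreLambdaRing R) : ℕ → R → R
  | 0, _ => 1
  | k + 1, r =>
      (-1 : R) ^ k *
        ∑ i ∈ (Finset.range (k + 1)).attach,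
          (-1 : R) ^ (i : ℕ) * lamR L i r * L.sigma (k + 1 - (i : ℕ)) r
  termination_by k => k
  decreasing_by exact Finset.mem_range.mp i.2

/-- The Adams operations (`pₖ ∘ ·`) derived from the σ-operations via the
Newton identity `k hₖ = ∑_{i=1}^{k} pᵢ h_{k-i}`. -/
noncomputable def adamsR (L : PreLambdaRing R) : ℕ → R → R
  | 0, _ => 1
  | k + 1, r =>
      (k + 1 : ℕ) • L.sigma (k + 1) r -
        ∑ i ∈ (Finset.range k).attach,
          adamsR L ((i : ℕ) + 1) r * L.sigma (k - (i : ℕ)) r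
  termination_by k => k
  decreasing_by exact Nat.succ_lt_succ (Finset.mem_range.mp i.2)


/-- Constructor for multivariate power series from a coefficient function. -/
def MvPS.mk {σ R : Type*} (f : (σ →₀ ℕ) → R) : MvPowerSeries σ R := f

/-- `z_τ = ∏ᵢ τ(i)!·i^{τ(i)}` for a partition `τ`. -/
def zPart (μ : Multiset ℕ) : ℕ :=
  ∏ i ∈ μ.toFinset, (μ.count i).factorial * i ^ (μ.count i)

section

variable [Algebra ℚ R] (L : PreLambdaRing R)

/-  `Λ_R^∧` is modeled in power sum coordinates: `MvPowerSeries ℕ R` where the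
variable of index `j ≥ 1` stands for `p_j` (index `0` is unused), so the
weight of a monomial `m` is `∑_j j·(m j)` and its number of parts is
`∑_j m j`. -/

/-- The weight (degree in `Λ`) of a `p`-monomial. -/
def wtP (m : ℕ →₀ ℕ) : ℕ := m.sum fun j c => j * c

/-- The number of parts of a `p`-monomial. -/
def szP (m : ℕ →₀ ℕ) : ℕ := m.sum fun _ c => c

/-- A symmetric power series is even if it is a formal sum of monomials of
even degree. -/
def EvenPS (f : MvPowerSeries ℕ R) : Prop :=
  ∀ m : ℕ →₀ ℕ, MvPowerSeries.coeff m f ≠ 0 → Even (wtP m)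

/-- The standard involution `ω` of `Λ_R^∧` in `p`-coordinates:
`ω(a·p_λ) = (-1)^{|λ| - ‖λ‖}·a·p_λ`. -/
noncomputable def omegaPS (f : MvPowerSeries ℕ R) : MvPowerSeries ℕ R :=
  MvPS.mk fun m => (-1 : R) ^ (wtP m + szP m) * MvPowerSeries.coeff m f

open Classical in
/-- Plethysm by the power sum `p_j` on `Λ_R^∧` in `p`-coordinates:
`p_j ∘ (a·p_λ) = (p_j ∘ a)·p_{jλ}`, using the Adams operations of the
torsion-free pre-λ ring `R` on coefficients. -/
noncomputable def pAdamsPS (j : ℕ) (f : MvPowerSeries ℕ R) :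
    MvPowerSeries ℕ R :=
  MvPS.mk fun m =>
    if h : ∃ m' : ℕ →₀ ℕ, Finsupp.mapDomain (fun i => j * i) m' = m then
      adamsR L j (MvPowerSeries.coeff (Classical.choose h) f)
    else 0

/-- The plethysm `h_k ∘ ·` on `Λ_R^∧` in `p`-coordinates, via
`h_k = ∑_{λ ⊢ k} p_λ / z_λ`. -/
noncomputable def hPlethP (k : ℕ) (f : MvPowerSeries ℕ R) :
    MvPowerSeries ℕ R :=
  MvPS.mk fun m =>
    ∑ lam : Nat.Partition k,
      ((zPart lam.parts : ℚ)⁻¹) •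
        MvPowerSeries.coeff m ((lam.parts.map fun j => pAdamsPS L j f).prod)

/-- The plethystic exponential `Exp_σ(f) = ∑_{k≥0} h_k ∘ f` in
`p`-coordinates. -/
noncomputable def ExpP (f : MvPowerSeries ℕ R) : MvPowerSeries ℕ R :=
  MvPS.mk fun m => ∑ᶠ k : ℕ, MvPowerSeries.coeff m (hPlethP L k f)

end

-- No finiteness of the support is needed: multiplication by a unit is injective.
theorem IsUnit.mul_finsum {M α : Type*} [Semiring M] {u : M} (hu : IsUnit u) (f : α → M) :
    u * ∑ᶠ i, f i = ∑ᶠ i, u * f i :=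
  (AddMonoidHom.mulLeft u).map_finsum_of_injective hu.mul_right_injective f

section AdamsOperations

variable (L : PreLambdaRing R)

noncomputable def sigmaSeries (r : R) : PowerSeries R := PowerSeries.mk fun n => L.sigma n r

noncomputable def adamsSeries (r : R) : PowerSeries R :=
  PowerSeries.mk fun n => adamsR L (n + 1) r

theorem sigmaSeries_add (r s : R) :
    sigmaSeries L (r + s) = sigmaSeries L r * sigmaSeries L s := by
  ext n
  simpa [sigmaSeries, PowerSeries.coeff_mul] using L.sigma_add n r s

theorem isUnit_sigmaSeries (r : R) : IsUnit (sigmaSeries L r) := by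
  simp [PowerSeries.isUnit_iff_constantCoeff, sigmaSeries, PowerSeries.constantCoeff_mk,
    L.sigma_zero]

theorem adamsR_newton (k : ℕ) (r : R) :
    (k + 1 : ℕ) • L.sigma (k + 1) r =
      ∑ i ∈ Finset.range (k + 1), adamsR L (i + 1) r * L.sigma (k - i) r := by
  rw [Finset.sum_range_succ, Nat.sub_self, L.sigma_zero, mul_one, adamsR.eq_2,
    Finset.sum_attach (Finset.range k) fun i => adamsR L (i + 1) r * L.sigma (k - i) r,
    add_sub_cancel]

theorem derivative_sigmaSeries (r : R) :
    PowerSeries.derivative R (sigmaSeries L r) = adamsSeries L r * sigmaSeries L r := by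
  ext n
  rw [PowerSeries.coeff_derivative, PowerSeries.coeff_mul,
    Finset.Nat.sum_antidiagonal_eq_sum_range_succ_mk]
  simp only [sigmaSeries, adamsSeries, PowerSeries.coeff_mk]
  rw [mul_comm, ← adamsR_newton, nsmul_eq_mul]
  push_cast
  ring

theorem adamsSeries_add (r s : R) :
    adamsSeries L (r + s) = adamsSeries L r + adamsSeries L s := by
  refine (isUnit_sigmaSeries L (r + s)).mul_right_cancel ?_
  rw [← derivative_sigmaSeries, sigmaSeries_add, Derivation.leibniz, derivative_sigmaSeries,
    derivative_sigmaSeries, smul_eq_mul, smul_eq_mul]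
  ring

theorem adamsR_add {k : ℕ} (hk : k ≠ 0) (r s : R) :
    adamsR L k (r + s) = adamsR L k r + adamsR L k s := by
  obtain ⟨k, rfl⟩ := Nat.exists_eq_succ_of_ne_zero hk
  simpa [adamsSeries] using congrArg (PowerSeries.coeff k) (adamsSeries_add L r s)

theorem adamsR_apply_zero {k : ℕ} (hk : k ≠ 0) : adamsR L k 0 = 0 :=
  (AddMonoidHom.mk' (adamsR L k) (adamsR_add L hk)).map_zero

theorem adamsR_neg_one_pow_mul {k : ℕ} (hk : k ≠ 0) (n : ℕ) (r : R) :
    adamsR L k ((-1) ^ n * r) = (-1) ^ n * adamsR L k r := by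
  rcases n.even_or_odd with hn | hn
  · simp [hn.neg_one_pow]
  · simpa [hn.neg_one_pow] using (AddMonoidHom.mk' (adamsR L k) (adamsR_add L hk)).map_neg r

end AdamsOperations


theorem wtP_add (a b : ℕ →₀ ℕ) : wtP (a + b) = wtP a + wtP b :=
  Finsupp.sum_add_index' (fun i => mul_zero i) fun i => mul_add i

theorem szP_add (a b : ℕ →₀ ℕ) : szP (a + b) = szP a + szP b :=
  Finsupp.sum_add_index' (fun _ => rfl) fun _ _ _ => rfl

theorem wtP_mapDomain_mul (j : ℕ) (m : ℕ →₀ ℕ) :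
    wtP (m.mapDomain (j * ·)) = j * wtP m := by
  rw [wtP, wtP, Finsupp.sum_mapDomain_index (fun i => mul_zero i) (fun i => mul_add i),
    Finsupp.mul_sum]
  exact Finsupp.sum_congr fun i _ => mul_assoc j i _

theorem szP_mapDomain (g : ℕ → ℕ) (m : ℕ →₀ ℕ) : szP (m.mapDomain g) = szP m :=
  Finsupp.sum_mapDomain_index (fun _ => rfl) fun _ _ _ => rfl

section Sign

variable {M : Type*} [Monoid M] [HasDistribNeg M]

theorem neg_one_pow_wtP_add_szP_add (a b : ℕ →₀ ℕ) :
    (-1 : M) ^ (wtP (a + b) + szP (a + b)) =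
      (-1) ^ (wtP a + szP a) * (-1) ^ (wtP b + szP b) := by
  rw [wtP_add, szP_add, add_add_add_comm, pow_add]

theorem neg_one_pow_wtP_add_szP_mapDomain_mul (j : ℕ) {m : ℕ →₀ ℕ} (hm : Even (wtP m)) :
    (-1 : M) ^ (wtP (m.mapDomain (j * ·)) + szP (m.mapDomain (j * ·))) =
      (-1) ^ (wtP m + szP m) := by
  rw [wtP_mapDomain_mul, szP_mapDomain, pow_add, pow_add, (hm.mul_left j).neg_one_pow,
    hm.neg_one_pow]

end Sign

theorem MvPS.coeff_mk {σ : Type*} (g : (σ →₀ ℕ) → R) (m : σ →₀ ℕ) :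
    MvPowerSeries.coeff m (MvPS.mk g) = g m :=
  rfl

theorem coeff_omegaPS (f : MvPowerSeries ℕ R) (m : ℕ →₀ ℕ) :
    MvPowerSeries.coeff m (omegaPS f) = (-1) ^ (wtP m + szP m) * MvPowerSeries.coeff m f :=
  rfl

theorem omegaPS_one : omegaPS (1 : MvPowerSeries ℕ R) = 1 := by
  ext m
  rw [coeff_omegaPS, MvPowerSeries.coeff_one]
  split_ifs with hm
  · simp [hm, wtP, szP]
  · rw [mul_zero]

theorem omegaPS_mul (f g : MvPowerSeries ℕ R) : omegaPS (f * g) = omegaPS f * omegaPS g := by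
  ext m
  rw [coeff_omegaPS, MvPowerSeries.coeff_mul, MvPowerSeries.coeff_mul, Finset.mul_sum]
  refine Finset.sum_congr rfl fun p hp => ?_
  rw [coeff_omegaPS, coeff_omegaPS, ← Finset.HasAntidiagonal.mem_antidiagonal.mp hp, neg_one_pow_wtP_add_szP_add]
  ring

theorem omegaPS_multiset_prod (s : Multiset (MvPowerSeries ℕ R)) :
    omegaPS s.prod = (s.map omegaPS).prod := by
  induction s using Multiset.induction_on with
  | empty => exact omegaPS_one
  | cons f s ih => rw [Multiset.prod_cons, omegaPS_mul, ih, Multiset.map_cons, Multiset.prod_cons]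

theorem pAdamsPS_omegaPS (L : PreLambdaRing R) {f : MvPowerSeries ℕ R} (hf : EvenPS f) {j : ℕ}
    (hj : j ≠ 0) : pAdamsPS L j (omegaPS f) = omegaPS (pAdamsPS L j f) := by
  ext m
  rw [coeff_omegaPS, pAdamsPS, pAdamsPS, MvPS.coeff_mk, MvPS.coeff_mk]
  by_cases h : ∃ m' : ℕ →₀ ℕ, m'.mapDomain (j * ·) = m
  · rw [dif_pos h, dif_pos h, coeff_omegaPS]
    by_cases hz : MvPowerSeries.coeff (Classical.choose h) f = 0
    · rw [hz, mul_zero, adamsR_apply_zero L hj, mul_zero]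
    · rw [adamsR_neg_one_pow_mul L hj, ← neg_one_pow_wtP_add_szP_mapDomain_mul j (hf _ hz),
        Classical.choose_spec h]
  · rw [dif_neg h, dif_neg h, mul_zero]

section

variable [Algebra ℚ R] (L : PreLambdaRing R)

theorem hPlethP_omegaPS {f : MvPowerSeries ℕ R} (hf : EvenPS f) (k : ℕ) :
    hPlethP L k (omegaPS f) = omegaPS (hPlethP L k f) := by
  ext m
  rw [coeff_omegaPS, hPlethP, hPlethP, MvPS.coeff_mk, MvPS.coeff_mk, Finset.mul_sum]
  refine Finset.sum_congr rfl fun lam _ => ?_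
  have hparts : lam.parts.map (fun j => pAdamsPS L j (omegaPS f)) =
      (lam.parts.map fun j => pAdamsPS L j f).map omegaPS := by
    rw [Multiset.map_map]
    exact Multiset.map_congr rfl fun j hj => pAdamsPS_omegaPS L hf (lam.parts_pos hj).ne'
  rw [hparts, ← omegaPS_multiset_prod, coeff_omegaPS, mul_smul_comm]

theorem expSigma_omega_even
    (f : MvPowerSeries ℕ R)
    (heven : EvenPS f) :
    ExpP L (omegaPS f) = omegaPS (ExpP L f) := by
  ext m
  rw [coeff_omegaPS, ExpP, ExpP, MvPS.coeff_mk, MvPS.coeff_mk,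
    ((isUnit_neg_one (α := R)).pow _).mul_finsum]
  exact finsum_congr fun k => by rw [hPlethP_omegaPS L heven, coeff_omegaPS]

end
end

section
/- Let V = ℂ^n with the permutation representation of the symmetric group Σ_n. Then dim (Sym^{k_1} V ⊗ ... ⊗ Sym^{k_ℓ} V)^{Σ_n} equals the number of ways to write the vector (k_1,...,k_ℓ) as ∑_{v ∈ ℤ_{≥0}^ℓ} a_v · v with nonnegative integer multiplicities a_v satisfying ∑_v a_v = n. -/
open MvPolynomial

/-- `Sym^{k₁}V ⊗ ⋯ ⊗ Sym^{k_ℓ}V` for `V = ℂ^n`, realized as the space of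
polynomials in variables `x_{j,t}` (`j ∈ Fin n`, `t ∈ Fin ℓ`) that are
multihomogeneous of multidegree `k = (k₁, …, k_ℓ)`. -/
noncomputable def symTensor (n ℓ : ℕ) (k : Fin ℓ → ℕ) :
    Submodule ℂ (MvPolynomial (Fin n × Fin ℓ) ℂ) :=
  weightedHomogeneousSubmodule ℂ (fun p => Pi.single p.2 1) k

/-- The subspace of `Σ_n`-invariants, where `Σ_n` permutes the first index of
the variables (i.e. acts on `V = ℂ^n` by the permutation representation and
diagonally on the tensor product). -/
noncomputable def permInvariants (n ℓ : ℕ) :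
    Submodule ℂ (MvPolynomial (Fin n × Fin ℓ) ℂ) :=
  ⨅ π : Equiv.Perm (Fin n),
    LinearMap.eqLocus
      (rename (fun p : Fin n × Fin ℓ => (π p.1, p.2))).toLinearMap
      LinearMap.id

/-! Write the exponent of a monomial in the variables `x_{i,t}` as a matrix whose rows are indexed
by `i ∈ Fin n`. Two exponent matrices differ by a permutation of `Σ_n` iff they have the same
multiset of rows, so a polynomial is invariant iff its coefficients depend only on that multiset.
Hence the orbit sums over the multisets `s` of `n` vectors with sum `k` form a basis of the
invariants of multidegree `k`; such an `s` is the same as the multiplicity vector `a` with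
`a v` the multiplicity of `v` in `s`. -/

open Finset

theorem Multiset.exists_fin_map_univ_eq {α : Type*} (s : Multiset α) :
    ∃ f : Fin (Multiset.card s) → α, univ.val.map f = s := by
  obtain ⟨l, rfl⟩ : ∃ l : List α, (l : Multiset α) = s := Quot.exists_rep s
  exact ⟨l.get, (Fin.univ_val_map l.get).trans (congrArg _ (List.ofFn_get l))⟩

theorem exists_comp_perm_eq_of_map_univ_eq {ι α : Type*} [Fintype ι] {f g : ι → α}
    (h : univ.val.map f = univ.val.map g) : ∃ σ : Equiv.Perm ι, g = f ∘ σ := by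
  classical
  have hfiber (v : α) : Nonempty ({i // g i = v} ≃ {i // f i = v}) := by
    refine Fintype.card_eq.mp ?_
    simpa [Fintype.card_subtype, Multiset.count_map, Finset.card, eq_comm] using
      (congrArg (Multiset.count v) h).symm
  exact ⟨Equiv.ofFiberEquiv fun v => (hfiber v).some,
    funext fun i => (Equiv.ofFiberEquiv_map _ i).symm⟩

theorem MvPolynomial.coeff_equivMapDomain_rename {σ τ R : Type*} [CommSemiring R] (e : σ ≃ τ)
    (p : MvPolynomial σ R) (d : σ →₀ ℕ) :
    coeff (d.equivMapDomain e) (rename e p) = coeff d p := by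
  rw [Finsupp.equivMapDomain_eq_mapDomain, coeff_rename_mapDomain e e.injective]

def sumDecompositions {α : Type*} [AddCommMonoid α] (n : ℕ) (k : α) : Set (Multiset α) :=
  {s | Multiset.card s = n ∧ s.sum = k}

theorem natCard_multiplicities_eq_natCard_sumDecompositions {α : Type*} [AddCommMonoid α]
    (n : ℕ) (k : α) :
    Nat.card {a : α →₀ ℕ // (a.sum fun _ c => c) = n ∧ (a.sum fun v c => c • v) = k} =
      Nat.card (sumDecompositions n k) := by
  classical
  refine Nat.card_congr <| Multiset.toFinsupp.symm.toEquiv.subtypeEquiv fun a => ?_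
  show _ ↔ Multiset.card (Finsupp.toMultiset a) = n ∧ (Finsupp.toMultiset a).sum = k
  rw [Finsupp.card_toMultiset, Finsupp.sum_toMultiset]
  rfl

theorem finite_sumDecompositions {α : Type*} [AddCommMonoid α] [PartialOrder α]
    [CanonicallyOrderedAdd α] [LocallyFiniteOrderBot α] (n : ℕ) (k : α) :
    (sumDecompositions n k).Finite := by
  refine ((Set.Finite.pi fun _ : Fin n => Set.finite_Iic k).image
    fun f => univ.val.map f).subset ?_
  rintro (s : Multiset α) ⟨rfl, rfl⟩
  obtain ⟨f, hf⟩ := Multiset.exists_fin_map_univ_eq s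
  exact ⟨f, fun i _ => Multiset.le_sum_of_mem (hf ▸ Multiset.mem_map_of_mem f (mem_univ_val i)),
    hf⟩

section ExponentRows

variable {n ℓ : ℕ}

def rowMultiset (d : (Fin n × Fin ℓ) →₀ ℕ) : Multiset (Fin ℓ → ℕ) :=
  univ.val.map fun i t => d (i, t)

def permVars (π : Equiv.Perm (Fin n)) : (Fin n × Fin ℓ) ≃ (Fin n × Fin ℓ) :=
  π.prodCongr (Equiv.refl _)

theorem rowMultiset_equivMapDomain (π : Equiv.Perm (Fin n)) (d : (Fin n × Fin ℓ) →₀ ℕ) :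
    rowMultiset (d.equivMapDomain (permVars π)) = rowMultiset d := by
  conv_rhs => rw [rowMultiset, ← Multiset.map_univ_val_equiv π.symm, Multiset.map_map]
  rfl

theorem exists_perm_of_rowMultiset_eq {d d' : (Fin n × Fin ℓ) →₀ ℕ}
    (h : rowMultiset d = rowMultiset d') :
    ∃ π : Equiv.Perm (Fin n), d' = d.equivMapDomain (permVars π) := by
  obtain ⟨σ, hσ⟩ := exists_comp_perm_eq_of_map_univ_eq h
  exact ⟨σ.symm, Finsupp.ext fun ⟨i, t⟩ => congrFun (congrFun hσ i) t⟩

theorem card_rowMultiset (d : (Fin n × Fin ℓ) →₀ ℕ) :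
    Multiset.card (rowMultiset d) = n := by
  simp [rowMultiset]

theorem exists_rowMultiset_eq (s : Multiset (Fin ℓ → ℕ)) (hs : Multiset.card s = n) :
    ∃ d : (Fin n × Fin ℓ) →₀ ℕ, rowMultiset d = s := by
  subst hs
  obtain ⟨f, hf⟩ := Multiset.exists_fin_map_univ_eq s
  exact ⟨Finsupp.equivFunOnFinite.symm fun p => f p.1 p.2, hf⟩

theorem finite_rowMultiset_fiber (s : Multiset (Fin ℓ → ℕ)) :
    {d : (Fin n × Fin ℓ) →₀ ℕ | rowMultiset d = s}.Finite := by
  refine ((Set.Finite.pi fun p : Fin n × Fin ℓ => Set.finite_Iic (s.sum p.2)).preimage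
    Finsupp.equivFunOnFinite.injective.injOn).subset ?_
  rintro d rfl ⟨i, t⟩ -
  exact Multiset.le_sum_of_mem (Multiset.mem_map_of_mem (fun i t => d (i, t)) (mem_univ_val i))
    t

theorem weight_eq_sum_rowMultiset (d : (Fin n × Fin ℓ) →₀ ℕ) :
    Finsupp.weight (fun p : Fin n × Fin ℓ => (Pi.single p.2 1 : Fin ℓ → ℕ)) d =
      (rowMultiset d).sum := by
  change _ = ∑ i, fun t => d (i, t)
  ext t
  simp [Finsupp.weight_apply, Finsupp.sum_fintype, Fintype.sum_prod_type, Finset.sum_apply,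
    Pi.single_apply]

end ExponentRows

section OrbitSums

variable {n ℓ : ℕ}

theorem mem_permInvariants_iff {p : MvPolynomial (Fin n × Fin ℓ) ℂ} :
    p ∈ permInvariants n ℓ ↔
      ∀ d d', rowMultiset d = rowMultiset d' → coeff d p = coeff d' p := by
  have hmem : p ∈ permInvariants n ℓ ↔ ∀ π, rename (permVars π) p = p :=
    Submodule.mem_iInf _
  rw [hmem]
  constructor
  · intro h d d' hd
    obtain ⟨π, rfl⟩ := exists_perm_of_rowMultiset_eq hd
    rw [← coeff_equivMapDomain_rename, h]
  · intro h π
    ext d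
    obtain ⟨d₀, rfl⟩ := (Finsupp.equivCongrLeft (permVars π)).surjective d
    exact (coeff_equivMapDomain_rename _ _ _).trans
      (h _ _ (rowMultiset_equivMapDomain π d₀).symm)

theorem mem_symTensor_iff {k : Fin ℓ → ℕ} {p : MvPolynomial (Fin n × Fin ℓ) ℂ} :
    p ∈ symTensor n ℓ k ↔ ∀ d, coeff d p ≠ 0 → (rowMultiset d).sum = k := by
  simp only [symTensor, mem_weightedHomogeneousSubmodule, IsWeightedHomogeneous,
    weight_eq_sum_rowMultiset]

variable (n) in
/-- By `exists_perm_of_rowMultiset_eq`, the monomials summed here form one `Σ_n`-orbit. -/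
noncomputable def orbitSum (s : Multiset (Fin ℓ → ℕ)) : MvPolynomial (Fin n × Fin ℓ) ℂ :=
  ∑ d ∈ (finite_rowMultiset_fiber s).toFinset, monomial d 1

theorem coeff_orbitSum (s : Multiset (Fin ℓ → ℕ)) (d : (Fin n × Fin ℓ) →₀ ℕ) :
    coeff d (orbitSum n s) = if rowMultiset d = s then 1 else 0 := by
  simp [orbitSum, coeff_sum, coeff_monomial]

theorem orbitSum_mem {k : Fin ℓ → ℕ} {s : Multiset (Fin ℓ → ℕ)}
    (hs : s ∈ sumDecompositions n k) :
    orbitSum n s ∈ symTensor n ℓ k ⊓ permInvariants n ℓ := by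
  refine ⟨mem_symTensor_iff.2 fun d hd => ?_, mem_permInvariants_iff.2 fun d d' h => ?_⟩
  · rw [coeff_orbitSum, ne_eq, ite_eq_right_iff, not_forall] at hd
    obtain ⟨rfl, -⟩ := hd
    exact hs.2
  · simp only [coeff_orbitSum, h]

theorem linearIndependent_orbitSum {S : Set (Multiset (Fin ℓ → ℕ))}
    (hS : ∀ s ∈ S, Multiset.card s = n) :
    LinearIndependent ℂ fun s : S => orbitSum n s.1 := by
  refine linearIndependent_iff'.2 fun t g hg s hs => ?_
  obtain ⟨d, hd⟩ := exists_rowMultiset_eq s.1 (hS s s.2)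
  simpa [coeff_sum, coeff_orbitSum, hd, Subtype.coe_inj, hs] using congrArg (coeff d) hg

theorem span_orbitSum (k : Fin ℓ → ℕ) :
    Submodule.span ℂ (Set.range fun s : sumDecompositions n k => orbitSum n s.1) =
      symTensor n ℓ k ⊓ permInvariants n ℓ := by
  refine le_antisymm (Submodule.span_le.2 <| Set.range_subset_iff.2 fun s => orbitSum_mem s.2)
    fun p hp => ?_
  have := (finite_sumDecompositions n k).fintype
  choose d hd using fun s : sumDecompositions n k => exists_rowMultiset_eq s.1 s.2.1
  suffices p = ∑ s, coeff (d s) p • orbitSum n s.1 by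
    rw [this]
    exact Submodule.sum_mem _ fun s _ => Submodule.smul_mem _ _ (Submodule.subset_span ⟨s, rfl⟩)
  ext e
  simp only [coeff_sum, coeff_smul, coeff_orbitSum, smul_eq_mul, mul_ite, mul_one, mul_zero]
  by_cases he : rowMultiset e ∈ sumDecompositions n k
  · rw [Finset.sum_eq_single ⟨_, he⟩ (fun s _ hs => if_neg fun h => hs (Subtype.ext h.symm))
      (fun h => (h (mem_univ _)).elim), if_pos rfl]
    exact mem_permInvariants_iff.1 hp.2 _ _ (hd ⟨_, he⟩).symm
  · rw [Finset.sum_eq_zero fun s _ => if_neg fun h : rowMultiset e = s.1 => he (h ▸ s.2)]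
    by_contra hne
    exact he ⟨card_rowMultiset e, mem_symTensor_iff.1 hp.1 e hne⟩

end OrbitSums

/-- Let `V = ℂ^n` with the permutation representation of the
symmetric group `Σ_n`.  Then `dim (Sym^{k₁}V ⊗ ⋯ ⊗ Sym^{k_ℓ}V)^{Σ_n}` equals
the number of ways to write the vector `(k₁, …, k_ℓ)` as
`∑_{v ∈ ℤ_{≥0}^ℓ} a_v·v` with nonnegative integer multiplicities `a_v`
satisfying `∑_v a_v = n`. -/
theorem dim_invariants_sym_tensor (n ℓ : ℕ) (k : Fin ℓ → ℕ) :
    Module.finrank ℂ ↥(symTensor n ℓ k ⊓ permInvariants n ℓ) =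
      Nat.card {a : (Fin ℓ → ℕ) →₀ ℕ //
        (a.sum fun _ c => c) = n ∧ (a.sum fun v c => c • v) = k} := by
  have := (finite_sumDecompositions n k).fintype
  rw [← span_orbitSum, finrank_span_eq_card (linearIndependent_orbitSum fun _ hs => hs.1),
    natCard_multiplicities_eq_natCard_sumDecompositions, Nat.card_eq_fintype_card]
end
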